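/- The open forward Funk ball of radius r > 0 around a point p in the interior of a bounded convex body Ω ⊆ ℝ² equals the image of the interior of Ω under the homothety centered at p with ratio 1 − e^{−r}. -/
import Mathlib


noncomputable section
local notation "E" => EuclideanSpace ℝ (Fin 2)

private lemma funk_val (p q q' : E) (t : ℝ) (ht : 1 < t) (hne : q ≠ p)
    (hq' : q' = p + t • (q - p)) :
    Real.log (‖p - q'‖ / ‖q - q'‖) = Real.log (t / (t - 1)) := by
  have hn : ‖q - p‖ ≠ 0 := by simp [sub_eq_zero, hne]
  have h1 : p - q' = (-t) • (q - p) := by rw [hq']; module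
  have h2 : q - q' = (1 - t) • (q - p) := by rw [hq']; module
  rw [h1, h2, norm_smul, norm_smul, Real.norm_eq_abs, Real.norm_eq_abs,
    abs_of_neg (by linarith : -t < 0), abs_of_neg (by linarith : 1 - t < 0),
    mul_div_mul_right _ _ hn]
  congr 1
  ring

private lemma log_ratio_lt (r t : ℝ) (ht : 1 < t) :
    Real.log (t / (t - 1)) < r ↔ 1 < (1 - Real.exp (-r)) * t := by
  have hmul : Real.exp (-r) * Real.exp r = 1 := by rw [← Real.exp_add]; simp
  have he : 0 < Real.exp r := Real.exp_pos r
  have hf : 0 < Real.exp (-r) := Real.exp_pos (-r)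
  have hpos : 0 < t / (t - 1) := div_pos (by linarith) (by linarith)
  rw [Real.log_lt_iff_lt_exp hpos, div_lt_iff₀ (by linarith : 0 < t - 1)]
  constructor
  · intro h
    nlinarith [mul_lt_mul_of_pos_left h hf]
  · intro h
    nlinarith [mul_lt_mul_of_pos_left h he]

theorem funk_ball_homothety (Ω : Set E) (hconv : Convex ℝ Ω) (hbd : Bornology.IsBounded Ω)
    (F : E → E → ℝ)
    (hF0 : ∀ p, F p p = 0)
    (hF : ∀ p q, p ∈ interior Ω → q ∈ interior Ω → p ≠ q →
      ∃ q' ∈ frontier Ω, (∃ t : ℝ, 1 < t ∧ q' = p + t • (q - p)) ∧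
        F p q = Real.log (‖p - q'‖ / ‖q - q'‖))
    (p : E) (hp : p ∈ interior Ω) (r : ℝ) (hr : 0 < r) :
    {q ∈ interior Ω | F p q < r} =
      AffineMap.homothety p (1 - Real.exp (-r)) '' interior Ω := by
  set l : ℝ := 1 - Real.exp (-r) with hl
  have hexp1 : Real.exp (-r) < 1 := by
    have := Real.exp_lt_exp.mpr (by linarith : -r < 0)
    simpa using this
  have hl0 : 0 < l := by simp only [hl]; linarith
  have hl1 : l < 1 := by have := Real.exp_pos (-r); simp only [hl]; linarith
  have hconvi : Convex ℝ (interior Ω) := hconv.interior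
  have homo_eq : ∀ x : E, AffineMap.homothety p l x = l • (x - p) + p := by
    intro x
    simp [AffineMap.homothety_apply]
  ext q
  constructor
  · rintro ⟨hq, hFq⟩
    by_cases hqp : q = p
    · subst hqp
      exact ⟨q, hq, by rw [homo_eq]; module⟩
    · obtain ⟨q', hq'f, ⟨t, ht, hq'⟩, hFval⟩ := hF p q hp hq (Ne.symm hqp)
      have hlog : Real.log (t / (t - 1)) < r := by
        rw [← funk_val p q q' t ht hqp hq', ← hFval]; exact hFq
      have hlt : 1 < l * t := (log_ratio_lt r t ht).mp hlog
      have hlt0 : 0 < l * t := lt_trans one_pos hlt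
      have hb0 : 0 < (l * t)⁻¹ := inv_pos.mpr hlt0
      have hb1 : (l * t)⁻¹ < 1 := by
        rw [inv_lt_one_iff₀]; right; exact hlt
      refine ⟨p + (l * t)⁻¹ • (q' - p), ?_, ?_⟩
      · apply hconv.openSegment_interior_closure_subset_interior hp
          (frontier_subset_closure hq'f)
        exact ⟨1 - (l * t)⁻¹, (l * t)⁻¹, by linarith, hb0, by ring, by module⟩
      · have hscal : l * (l * t)⁻¹ * t = 1 := by
          rw [show l * (l * t)⁻¹ * t = (l * t) * (l * t)⁻¹ by ring,
            mul_inv_cancel₀ (ne_of_gt hlt0)]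
        have h3 : p + (l * t)⁻¹ • (q' - p) - p = (l * t)⁻¹ • (t • (q - p)) := by
          rw [hq']; module
        rw [homo_eq, h3, smul_smul, smul_smul, hscal, one_smul, sub_add_cancel]
  · rintro ⟨x, hx, rfl⟩
    by_cases hxp : x = p
    · have hfix : AffineMap.homothety p l x = p := by rw [homo_eq, hxp]; module
      rw [hfix]
      exact ⟨hp, by rw [hF0]; exact hr⟩
    · have hq_int : AffineMap.homothety p l x ∈ interior Ω := by
        rw [show AffineMap.homothety p l x = (1 - l) • p + l • x by rw [homo_eq]; module]
        exact hconvi hp hx (by linarith) hl0.le (by ring)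
      have hne : AffineMap.homothety p l x ≠ p := by
        rw [homo_eq]
        intro h
        apply hxp
        have h0 : l • (x - p) = 0 := by
          have := congrArg (· - p) h
          simpa using this
        rcases smul_eq_zero.mp h0 with h1 | h1
        · exact absurd h1 (ne_of_gt hl0)
        · rw [sub_eq_zero] at h1; exact h1
      obtain ⟨q', hq'f, ⟨t, ht, hq'⟩, hFval⟩ := hF p _ hp hq_int (Ne.symm hne)
      refine ⟨hq_int, ?_⟩
      rw [hFval, funk_val p _ q' t ht hne hq']
      rw [log_ratio_lt r t ht]
      by_contra hcon
      push_neg at hcon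
      rw [← hl] at hcon
      have hq'int : q' ∈ interior Ω := by
        rw [show q' = (1 - l * t) • p + (l * t) • x by rw [hq', homo_eq]; module]
        exact hconvi hp hx (by linarith) (mul_pos hl0 (by linarith : (0:ℝ) < t)).le (by ring)
      exact hq'f.2 hq'int
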